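/- arXiv:math/0612840 — 7 statements merged into one kernel-verified Lean document; each statement's English description precedes it below -/
import Mathlib

section
/- If the series Σ x_k of real numbers statistically converges to some s ∈ ℝ, then there exists a strictly increasing sequence of indices (n_k) such that x_{n_k} → 0 as k → ∞. -/
open Filter Topology

/-!
Proof idea: `x n` is the difference of the partial sums `S (n + 1)` and `S n`, both of which converge
statistically to `s`, so `x` converges statistically to `0`. A set of density zero has an infinite
complement, so a statistical limit is a cluster point of the sequence, and in `ℝ` every cluster point
of a sequence is the limit of a subsequence.
-/

/-- A set `A ⊆ ℕ` is negligible if its natural density is zero. -/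
def Negligible (A : Set ℕ) : Prop :=
  Tendsto (fun n : ℕ => ((A ∩ Set.Iio n).ncard : ℝ) / n) atTop (nhds 0)

/-- A sequence of reals statistically converges to `a`. -/
def StatTendsto (s : ℕ → ℝ) (a : ℝ) : Prop :=
  ∀ ε : ℝ, ε > 0 → Negligible {n : ℕ | |s n - a| > ε}

namespace Negligible

variable {A B : Set ℕ}

theorem mono (hAB : A ⊆ B) (hB : Negligible B) : Negligible A := by
  refine squeeze_zero (fun n => by positivity) (fun n => ?_) hB
  gcongr
  exact (Set.finite_Iio n).inter_of_right B

theorem union (hA : Negligible A) (hB : Negligible B) : Negligible (A ∪ B) := by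
  refine squeeze_zero (fun n => by positivity) (fun n => ?_) (by simpa using hA.add hB)
  rw [← add_div, Set.union_inter_distrib_right]
  gcongr
  exact_mod_cast Set.ncard_union_le _ _

theorem preimage_add_right (hA : Negligible A) (k : ℕ) : Negligible ((· + k) ⁻¹' A) := by
  have hbound (n : ℕ) : (((· + k) ⁻¹' A) ∩ Set.Iio n).ncard ≤ (A ∩ Set.Iio n).ncard + k :=
    calc (((· + k) ⁻¹' A) ∩ Set.Iio n).ncard
        ≤ (A ∩ Set.Iio (n + k)).ncard := by
          rw [← Set.ncard_image_of_injective _ (add_left_injective k)]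
          refine Set.ncard_le_ncard ?_ ((Set.finite_Iio _).inter_of_right A)
          rintro _ ⟨m, ⟨hmA, hmn⟩, rfl⟩
          exact ⟨hmA, Nat.add_lt_add_right hmn k⟩
      _ ≤ ((A ∩ Set.Iio n) ∪ Set.Ico n (n + k)).ncard := by
          refine Set.ncard_le_ncard ?_ (((Set.finite_Iio n).inter_of_right A).union
            (Set.finite_Ico n (n + k)))
          rintro m ⟨hmA, hm⟩
          by_cases hmn : m < n
          · exact Or.inl ⟨hmA, hmn⟩
          · exact Or.inr ⟨not_lt.mp hmn, hm⟩
      _ ≤ (A ∩ Set.Iio n).ncard + k := by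
          simpa using Set.ncard_union_le (A ∩ Set.Iio n) (Set.Ico n (n + k))
  refine squeeze_zero (fun n => by positivity) (fun n => ?_)
    (by simpa using hA.add (tendsto_const_div_atTop_nhds_zero_nat (k : ℝ)))
  rw [← add_div]
  gcongr
  exact_mod_cast hbound n

end Negligible

theorem Set.Finite.negligible {A : Set ℕ} (hA : A.Finite) : Negligible A := by
  refine squeeze_zero (fun n => by positivity) (fun n => ?_)
    (tendsto_const_div_atTop_nhds_zero_nat (A.ncard : ℝ))
  gcongr
  exact Set.inter_subset_left

theorem not_negligible_univ : ¬ Negligible Set.univ := by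
  intro h
  have hone : Tendsto (fun n : ℕ => ((Set.univ ∩ Set.Iio n).ncard : ℝ) / n) atTop (𝓝 1) := by
    refine tendsto_const_nhds.congr' ?_
    filter_upwards [eventually_ne_atTop 0] with n hn
    simp [hn]
  exact one_ne_zero (tendsto_nhds_unique hone h)

namespace Negligible

variable {A : Set ℕ}

theorem infinite_compl (hA : Negligible A) : Aᶜ.Infinite := fun hfin =>
  not_negligible_univ (by simpa using hA.union hfin.negligible)

theorem frequently_notMem (hA : Negligible A) : ∃ᶠ n in atTop, n ∉ A :=
  Nat.frequently_atTop_iff_infinite.2 hA.infinite_compl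

end Negligible

namespace StatTendsto

variable {u v : ℕ → ℝ} {a b : ℝ}

theorem comp_add_right (hu : StatTendsto u a) (k : ℕ) : StatTendsto (fun n => u (n + k)) a :=
  fun ε hε => (hu ε hε).preimage_add_right k

theorem sub (hu : StatTendsto u a) (hv : StatTendsto v b) :
    StatTendsto (fun n => u n - v n) (a - b) := by
  intro ε hε
  refine ((hu (ε / 2) (by positivity)).union (hv (ε / 2) (by positivity))).mono fun n hn => ?_
  by_contra! hsmall
  simp only [Set.mem_union, Set.mem_ofPred_eq, not_or, not_lt] at hsmall hn
  have := abs_sub (u n - a) (v n - b)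
  rw [show u n - a - (v n - b) = u n - v n - (a - b) by ring] at this
  linarith

theorem mapClusterPt (hu : StatTendsto u a) : MapClusterPt a atTop u := by
  refine Metric.nhds_basis_closedBall.mapClusterPt_iff_frequently.2 fun ε hε => ?_
  refine (hu ε hε).frequently_notMem.mono fun n hn => ?_
  simpa [Real.dist_eq] using hn

end StatTendsto

theorem exists_subseq_tendsto_zero_of_statConv (x : ℕ → ℝ) (s : ℝ)
    (hs : StatTendsto (fun n : ℕ => ∑ k ∈ Finset.range n, x k) s) :
    ∃ φ : ℕ → ℕ, StrictMono φ ∧ Tendsto (fun k : ℕ => x (φ k)) atTop (nhds 0) := by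
  have hx : StatTendsto x 0 := by
    simpa [Finset.sum_range_succ] using (hs.comp_add_right 1).sub hs
  exact hx.mapClusterPt.tendsto_subseq
end

section
/- Let (x_k) be a sequence of real numbers and define α_k = x_{2k−1} + x_{2k} for all k ∈ ℕ. If the series Σ α_k converges conditionally (converges but not absolutely), then SR_2(Σ x_k) = ℝ. -/
open Filter Topology


noncomputable def RRst (α : ℕ → ℝ) (p q : ℕ → ℕ) (s : ℝ) : ℕ → ℕ × ℕ × ℝ
  | 0 => (0, 0, 0)
  | n + 1 =>
    let t := RRst α p q s n
    if t.2.2 ≤ s then (t.1 + 1, t.2.1, t.2.2 + α (p t.1))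
    else (t.1, t.2.1 + 1, t.2.2 + α (q t.2.1))

noncomputable def RRsel (α : ℕ → ℝ) (p q : ℕ → ℕ) (s : ℝ) (n : ℕ) : ℕ :=
  if (RRst α p q s n).2.2 ≤ s then p (RRst α p q s n).1 else q (RRst α p q s n).2.1

variable (α : ℕ → ℝ) (p q : ℕ → ℕ) (s : ℝ)

lemma RRst_zero : RRst α p q s 0 = (0, 0, 0) := rfl

lemma RRst_succ_pos {n : ℕ} (h : (RRst α p q s n).2.2 ≤ s) :
    RRst α p q s (n + 1) =
      ((RRst α p q s n).1 + 1, (RRst α p q s n).2.1,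
        (RRst α p q s n).2.2 + α (p (RRst α p q s n).1)) := by
  rw [RRst]; simp [h]

lemma RRst_succ_neg {n : ℕ} (h : ¬ (RRst α p q s n).2.2 ≤ s) :
    RRst α p q s (n + 1) =
      ((RRst α p q s n).1, (RRst α p q s n).2.1 + 1,
        (RRst α p q s n).2.2 + α (q (RRst α p q s n).2.1)) := by
  rw [RRst]; simp [h]

lemma RRsel_pos {n : ℕ} (h : (RRst α p q s n).2.2 ≤ s) :
    RRsel α p q s n = p (RRst α p q s n).1 := by rw [RRsel, if_pos h]

lemma RRsel_neg {n : ℕ} (h : ¬ (RRst α p q s n).2.2 ≤ s) :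
    RRsel α p q s n = q (RRst α p q s n).2.1 := by rw [RRsel, if_neg h]

lemma RRS_sum (n : ℕ) :
    (RRst α p q s n).2.2 = ∑ k ∈ Finset.range n, α (RRsel α p q s k) := by
  induction n with
  | zero => simp [RRst_zero]
  | succ n ih =>
    rw [Finset.sum_range_succ, ← ih]
    by_cases h : (RRst α p q s n).2.2 ≤ s
    · rw [RRst_succ_pos α p q s h, RRsel_pos α p q s h]
    · rw [RRst_succ_neg α p q s h, RRsel_neg α p q s h]

lemma RRIJ (n : ℕ) : (RRst α p q s n).1 + (RRst α p q s n).2.1 = n := by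
  induction n with
  | zero => simp [RRst_zero]
  | succ n ih =>
    by_cases h : (RRst α p q s n).2.2 ≤ s
    · rw [RRst_succ_pos α p q s h]; simpa using by omega
    · rw [RRst_succ_neg α p q s h]; simpa using by omega

lemma RRI_le_succ (n : ℕ) : (RRst α p q s n).1 ≤ (RRst α p q s (n+1)).1 := by
  by_cases h : (RRst α p q s n).2.2 ≤ s
  · rw [RRst_succ_pos α p q s h]; simp
  · rw [RRst_succ_neg α p q s h]

lemma RRJ_le_succ (n : ℕ) : (RRst α p q s n).2.1 ≤ (RRst α p q s (n+1)).2.1 := by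
  by_cases h : (RRst α p q s n).2.2 ≤ s
  · rw [RRst_succ_pos α p q s h]
  · rw [RRst_succ_neg α p q s h]; simp

lemma RRI_mono : Monotone (fun n => (RRst α p q s n).1) :=
  monotone_nat_of_le_succ (RRI_le_succ α p q s)

lemma RRJ_mono : Monotone (fun n => (RRst α p q s n).2.1) :=
  monotone_nat_of_le_succ (RRJ_le_succ α p q s)

lemma RR_main
    (hα0 : Tendsto α atTop (nhds 0))
    (hpP : ∀ i, 0 ≤ α (p i)) (hqQ : ∀ j, α (q j) < 0)
    (hpinj : Function.Injective p) (hqinj : Function.Injective q)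
    (hrangep : ∀ t, 0 ≤ α t → ∃ i, p i = t)
    (hrangeq : ∀ t, α t < 0 → ∃ j, q j = t)
    (hU : ∀ C : ℝ, ∃ m, C < ∑ i ∈ Finset.range m, α (p i))
    (hT : ∀ C : ℝ, ∃ m, ∑ j ∈ Finset.range m, α (q j) < C) :
    Function.Bijective (RRsel α p q s) ∧
      Tendsto (fun n => ∑ k ∈ Finset.range n, α (RRsel α p q s k)) atTop (nhds s) := by
  classical
  have hpq : ∀ i j, p i ≠ q j := fun i j h => absurd (hqQ j) (by rw [← h]; exact not_lt.2 (hpP i))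
  have hUmono : Monotone (fun m => ∑ i ∈ Finset.range m, α (p i)) :=
    monotone_nat_of_le_succ (fun m => by rw [Finset.sum_range_succ]; linarith [hpP m])
  have hTanti : Antitone (fun m => ∑ j ∈ Finset.range m, α (q j)) :=
    antitone_nat_of_succ_le (fun m => by rw [Finset.sum_range_succ]; linarith [hqQ m])
  -- injectivity
  have hinj : Function.Injective (RRsel α p q s) := by
    have key : ∀ m n, m < n → RRsel α p q s m ≠ RRsel α p q s n := by
      intro m n hmn heq
      by_cases hm : (RRst α p q s m).2.2 ≤ s <;> by_cases hn : (RRst α p q s n).2.2 ≤ s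
      · rw [RRsel_pos α p q s hm, RRsel_pos α p q s hn] at heq
        have h1 : (RRst α p q s m).1 = (RRst α p q s n).1 := hpinj heq
        have h2 := RRst_succ_pos α p q s hm
        have h3 : (RRst α p q s (m+1)).1 ≤ (RRst α p q s n).1 := RRI_mono α p q s hmn
        rw [h2] at h3
        simp at h3
        omega
      · rw [RRsel_pos α p q s hm, RRsel_neg α p q s hn] at heq
        exact hpq _ _ heq
      · rw [RRsel_neg α p q s hm, RRsel_pos α p q s hn] at heq
        exact hpq _ _ heq.symm
      · rw [RRsel_neg α p q s hm, RRsel_neg α p q s hn] at heq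
        have h1 : (RRst α p q s m).2.1 = (RRst α p q s n).2.1 := hqinj heq
        have h2 := RRst_succ_neg α p q s hm
        have h3 : (RRst α p q s (m+1)).2.1 ≤ (RRst α p q s n).2.1 := RRJ_mono α p q s hmn
        rw [h2] at h3
        simp at h3
        omega
    intro a b hab
    rcases lt_trichotomy a b with h|h|h
    · exact absurd hab (key a b h)
    · exact h
    · exact absurd hab.symm (key b a h)
  -- positive picks happen beyond any point
  have hApos : ∀ N, ∃ n, N ≤ n ∧ (RRst α p q s n).2.2 ≤ s := by
    intro N; by_contra hcon; push_neg at hcon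
    have hinv : ∀ n, N ≤ n →
        (RRst α p q s n).2.2 - (∑ j ∈ Finset.range (RRst α p q s n).2.1, α (q j)) =
          (RRst α p q s N).2.2 - (∑ j ∈ Finset.range (RRst α p q s N).2.1, α (q j)) ∧
        (RRst α p q s N).2.1 + (n - N) = (RRst α p q s n).2.1 := by
      intro n hn
      induction n, hn using Nat.le_induction with
      | base => exact ⟨rfl, by omega⟩
      | succ n hn ih =>
        have hneg : ¬ (RRst α p q s n).2.2 ≤ s := not_le.2 (hcon n hn)
        rw [RRst_succ_neg α p q s hneg]
        constructor
        · simp only [Finset.sum_range_succ]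
          linarith [ih.1]
        · have := ih.2; simp only; omega
    obtain ⟨m, hm⟩ := hT (s - ((RRst α p q s N).2.2 -
      (∑ j ∈ Finset.range (RRst α p q s N).2.1, α (q j))))
    have h1 := hinv (N + m) (by omega)
    have h2 : m ≤ (RRst α p q s (N + m)).2.1 := by omega
    have h3 := hTanti h2
    have h4 := hcon (N + m) (by omega)
    simp only at h3
    linarith [h1.1]
  -- negative picks happen beyond any point
  have hAneg : ∀ N, ∃ n, N ≤ n ∧ s < (RRst α p q s n).2.2 := by
    intro N; by_contra hcon; push_neg at hcon
    have hinv : ∀ n, N ≤ n →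
        (RRst α p q s n).2.2 - (∑ i ∈ Finset.range (RRst α p q s n).1, α (p i)) =
          (RRst α p q s N).2.2 - (∑ i ∈ Finset.range (RRst α p q s N).1, α (p i)) ∧
        (RRst α p q s N).1 + (n - N) = (RRst α p q s n).1 := by
      intro n hn
      induction n, hn using Nat.le_induction with
      | base => exact ⟨rfl, by omega⟩
      | succ n hn ih =>
        have hpos : (RRst α p q s n).2.2 ≤ s := hcon n hn
        rw [RRst_succ_pos α p q s hpos]
        constructor
        · simp only [Finset.sum_range_succ]
          linarith [ih.1]
        · have := ih.2; simp only; omega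
    obtain ⟨m, hm⟩ := hU (s - ((RRst α p q s N).2.2 -
      (∑ i ∈ Finset.range (RRst α p q s N).1, α (p i))))
    have h1 := hinv (N + m) (by omega)
    have h2 : m ≤ (RRst α p q s (N + m)).1 := by omega
    have h3 := hUmono h2
    have h4 := hcon (N + m) (by omega)
    simp only at h3
    linarith [h1.1]

  -- surjectivity
  have hhitp : ∀ i₀, ∃ n, RRsel α p q s n = p i₀ := by
    intro i₀
    have hex : ∃ n, i₀ < (RRst α p q s n).1 := by
      induction i₀ with
      | zero =>
        obtain ⟨n, _, hn2⟩ := hApos 0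
        refine ⟨n + 1, ?_⟩
        rw [RRst_succ_pos α p q s hn2]; simp
      | succ i₀ ih =>
        obtain ⟨n, hn⟩ := ih
        obtain ⟨n', hn'1, hn'2⟩ := hApos n
        refine ⟨n' + 1, ?_⟩
        have h3 : (RRst α p q s n).1 ≤ (RRst α p q s n').1 := RRI_mono α p q s hn'1
        rw [RRst_succ_pos α p q s hn'2]
        simp only
        omega
    let M := Nat.find hex
    have hM1 : i₀ < (RRst α p q s M).1 := Nat.find_spec hex
    have hM0 : M ≠ 0 := by
      intro h
      rw [h] at hM1
      simp [RRst_zero] at hM1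
    obtain ⟨t, ht⟩ : ∃ t, M = t + 1 := ⟨M - 1, by omega⟩
    have htmin : ¬ i₀ < (RRst α p q s t).1 := Nat.find_min hex (by omega)
    rw [ht] at hM1
    by_cases hc : (RRst α p q s t).2.2 ≤ s
    · refine ⟨t, ?_⟩
      rw [RRsel_pos α p q s hc]
      congr 1
      rw [RRst_succ_pos α p q s hc] at hM1
      simp only at hM1
      omega
    · rw [RRst_succ_neg α p q s hc] at hM1
      simp only at hM1
      omega
  have hhitq : ∀ j₀, ∃ n, RRsel α p q s n = q j₀ := by
    intro j₀
    have hex : ∃ n, j₀ < (RRst α p q s n).2.1 := by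
      induction j₀ with
      | zero =>
        obtain ⟨n, _, hn2⟩ := hAneg 0
        refine ⟨n + 1, ?_⟩
        rw [RRst_succ_neg α p q s (not_le.2 hn2)]; simp
      | succ j₀ ih =>
        obtain ⟨n, hn⟩ := ih
        obtain ⟨n', hn'1, hn'2⟩ := hAneg n
        refine ⟨n' + 1, ?_⟩
        have h3 : (RRst α p q s n).2.1 ≤ (RRst α p q s n').2.1 := RRJ_mono α p q s hn'1
        rw [RRst_succ_neg α p q s (not_le.2 hn'2)]
        simp only
        omega
    let M := Nat.find hex
    have hM1 : j₀ < (RRst α p q s M).2.1 := Nat.find_spec hex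
    have hM0 : M ≠ 0 := by
      intro h
      rw [h] at hM1
      simp [RRst_zero] at hM1
    obtain ⟨t, ht⟩ : ∃ t, M = t + 1 := ⟨M - 1, by omega⟩
    have htmin : ¬ j₀ < (RRst α p q s t).2.1 := Nat.find_min hex (by omega)
    rw [ht] at hM1
    by_cases hc : (RRst α p q s t).2.2 ≤ s
    · rw [RRst_succ_pos α p q s hc] at hM1
      simp only at hM1
      omega
    · refine ⟨t, ?_⟩
      rw [RRsel_neg α p q s hc]
      congr 1
      rw [RRst_succ_neg α p q s hc] at hM1
      simp only at hM1
      omega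
  have hsurj : Function.Surjective (RRsel α p q s) := by
    intro t
    rcases le_or_gt 0 (α t) with ht|ht
    · obtain ⟨i₀, hi₀⟩ := hrangep t ht
      obtain ⟨n, hn⟩ := hhitp i₀
      exact ⟨n, by rw [hn, hi₀]⟩
    · obtain ⟨j₀, hj₀⟩ := hrangeq t ht
      obtain ⟨n, hn⟩ := hhitq j₀
      exact ⟨n, by rw [hn, hj₀]⟩
  -- terms of rearranged series tend to 0
  have hσ0 : Tendsto (fun n => α (RRsel α p q s n)) atTop (nhds 0) := by
    have h1 : Tendsto (RRsel α p q s) cofinite cofinite := hinj.tendsto_cofinite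
    rw [Nat.cofinite_eq_atTop] at h1
    exact hα0.comp h1
  -- convergence of partial sums to s
  have hconvS : Tendsto (fun n => (RRst α p q s n).2.2) atTop (nhds s) := by
    rw [Metric.tendsto_atTop]
    intro ε hε
    obtain ⟨N₁, hN₁⟩ := Metric.tendsto_atTop.1 hσ0 (ε/2) (by linarith)
    have hN₁' : ∀ k, N₁ ≤ k → |α (RRsel α p q s k)| < ε/2 := by
      intro k hk
      have := hN₁ k hk
      rwa [Real.dist_eq, sub_zero] at this
    obtain ⟨m, hmN, hmS⟩ := hApos N₁
    have hW : ∃ n, m < n ∧ s < (RRst α p q s n).2.2 := by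
      obtain ⟨n, hn1, hn2⟩ := hAneg (m + 1)
      exact ⟨n, by omega, hn2⟩
    have hM1 := Nat.find_spec hW
    have hM0 : Nat.find hW ≠ 0 := by
      intro h
      have := hM1.1
      omega
    obtain ⟨t, ht⟩ : ∃ t, Nat.find hW = t + 1 := ⟨Nat.find hW - 1, by omega⟩
    have hmt : m ≤ t := by have := hM1.1; omega
    have hts : (RRst α p q s t).2.2 ≤ s := by
      rcases eq_or_lt_of_le hmt with h|h
      · rw [← h]; exact hmS
      · have h2 := Nat.find_min hW (show t < Nat.find hW by omega)
        push_neg at h2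
        exact h2 h
    have hcross : s < (RRst α p q s (t+1)).2.2 := by rw [← ht]; exact hM1.2
    have hb1 : |(RRst α p q s (t+1)).2.2 - s| ≤ ε/2 := by
      have hαt := hN₁' t (by omega)
      rw [RRsel_pos α p q s hts] at hαt
      rw [RRst_succ_pos α p q s hts] at hcross ⊢
      simp only at hcross ⊢
      rw [abs_of_pos (by linarith)]
      rw [abs_lt] at hαt
      linarith
    have hmain : ∀ n, t + 1 ≤ n → |(RRst α p q s n).2.2 - s| ≤ ε/2 := by
      intro n hn
      induction n, hn using Nat.le_induction with
      | base => exact hb1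
      | succ n hn ih =>
        have hαn := hN₁' n (by omega)
        rw [abs_le] at ih ⊢
        by_cases h : (RRst α p q s n).2.2 ≤ s
        · rw [RRsel_pos α p q s h] at hαn
          rw [RRst_succ_pos α p q s h]
          simp only
          rw [abs_lt] at hαn
          constructor
          · linarith [hpP (RRst α p q s n).1]
          · linarith
        · rw [RRsel_neg α p q s h] at hαn
          rw [RRst_succ_neg α p q s h]
          push_neg at h
          simp only
          rw [abs_lt] at hαn
          constructor
          · linarith
          · linarith [hqQ (RRst α p q s n).2.1]
    refine ⟨t + 1, fun n hn => ?_⟩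
    rw [Real.dist_eq]
    exact lt_of_le_of_lt (hmain n hn) (by linarith)
  refine ⟨⟨hinj, hsurj⟩, ?_⟩
  have heq : (fun n => ∑ k ∈ Finset.range n, α (RRsel α p q s k)) =
      fun n => (RRst α p q s n).2.2 := funext fun n => (RRS_sum α p q s n).symm
  rw [heq]
  exact hconvS

lemma riemann_rearrangement (α : ℕ → ℝ)
    (hconv : ∃ L : ℝ, Tendsto (fun n : ℕ => ∑ k ∈ Finset.range n, α k) atTop (nhds L))
    (habs : ¬ Summable (fun k : ℕ => |α k|)) (s : ℝ) :
    ∃ σ : Equiv.Perm ℕ,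
      Tendsto (fun n : ℕ => ∑ k ∈ Finset.range n, α (σ k)) atTop (nhds s) := by
  classical
  obtain ⟨L, hL⟩ := hconv
  -- terms tend to zero
  have hα0 : Tendsto α atTop (nhds 0) := by
    have h1 : Tendsto (fun n => (∑ k ∈ Finset.range (n+1), α k) - ∑ k ∈ Finset.range n, α k)
        atTop (nhds (L - L)) := ((hL.comp (tendsto_add_atTop_nat 1)).sub hL)
    simp only [Finset.sum_range_succ, add_sub_cancel_left, sub_self] at h1
    exact h1
  -- partial sums are bounded
  have hbdd : ∃ C : ℝ, ∀ n, |∑ k ∈ Finset.range n, α k| ≤ C := by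
    have h1 := Metric.isBounded_range_of_tendsto _ hL
    rw [isBounded_iff_bddBelow_bddAbove] at h1
    obtain ⟨⟨a, ha⟩, ⟨b, hb⟩⟩ := h1
    refine ⟨|a| + |b|, fun n => ?_⟩
    have h2 := ha (Set.mem_range_self n)
    have h3 := hb (Set.mem_range_self n)
    rw [abs_le]
    constructor
    · have : -(|a| + |b|) ≤ a := by
        have := neg_abs_le a
        have := abs_nonneg b
        linarith
      linarith
    · have : b ≤ |a| + |b| := by
        have := le_abs_self b
        have := abs_nonneg a
        linarith
      linarith
  obtain ⟨C, hC⟩ := hbdd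
  have habs2 : ∀ a : ℝ, |a| = 2 * max a 0 - a := by
    intro a
    rcases le_or_gt 0 a with h|h
    · rw [abs_of_nonneg h, max_eq_left h]; ring
    · rw [abs_of_neg h, max_eq_right h.le]; ring
  have habs3 : ∀ a : ℝ, |a| = 2 * max (-a) 0 + a := by
    intro a
    rcases le_or_gt 0 a with h|h
    · rw [abs_of_nonneg h, max_eq_right (by linarith)]; ring
    · rw [abs_of_neg h, max_eq_left (by linarith)]; ring
  -- divergence of positive part
  have hposdiv : Tendsto (fun K => ∑ k ∈ Finset.range K, max (α k) 0) atTop atTop := by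
    rw [← not_summable_iff_tendsto_nat_atTop_of_nonneg (fun n => le_max_right _ _)]
    intro hsum
    apply habs
    apply summable_of_sum_range_le (c := 2 * (∑' k, max (α k) 0) + C) (fun n => abs_nonneg _)
    intro n
    have h1 : ∑ k ∈ Finset.range n, |α k|
        = 2 * (∑ k ∈ Finset.range n, max (α k) 0) - ∑ k ∈ Finset.range n, α k := by
      rw [Finset.mul_sum, ← Finset.sum_sub_distrib]
      exact Finset.sum_congr rfl fun k _ => habs2 (α k)
    have h2 : ∑ k ∈ Finset.range n, max (α k) 0 ≤ ∑' k, max (α k) 0 :=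
      Summable.sum_le_tsum (Finset.range n) (fun k _ => le_max_right _ _) hsum
    have h3 := hC n
    rw [abs_le] at h3
    linarith
  -- divergence of negative part
  have hnegdiv : Tendsto (fun K => ∑ k ∈ Finset.range K, max (-α k) 0) atTop atTop := by
    rw [← not_summable_iff_tendsto_nat_atTop_of_nonneg (fun n => le_max_right _ _)]
    intro hsum
    apply habs
    apply summable_of_sum_range_le (c := 2 * (∑' k, max (-α k) 0) + C) (fun n => abs_nonneg _)
    intro n
    have h1 : ∑ k ∈ Finset.range n, |α k|
        = 2 * (∑ k ∈ Finset.range n, max (-α k) 0) + ∑ k ∈ Finset.range n, α k := by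
      rw [Finset.mul_sum, ← Finset.sum_add_distrib]
      exact Finset.sum_congr rfl fun k _ => habs3 (α k)
    have h2 : ∑ k ∈ Finset.range n, max (-α k) 0 ≤ ∑' k, max (-α k) 0 :=
      Summable.sum_le_tsum (Finset.range n) (fun k _ => le_max_right _ _) hsum
    have h3 := hC n
    rw [abs_le] at h3
    linarith
  -- infinitude of positive and negative index sets
  have hPinf : (setOf (fun k => 0 ≤ α k)).Infinite := by
    by_contra h
    rw [Set.not_infinite] at h
    have hsum : Summable (fun k => max (α k) 0) := by
      apply summable_of_ne_finset_zero (s := h.toFinset)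
      intro k hk
      rw [Set.Finite.mem_toFinset] at hk
      have hk2 : α k < 0 := not_le.1 hk
      exact max_eq_right hk2.le
    exact (summable_iff_not_tendsto_nat_atTop_of_nonneg (fun n => le_max_right _ _)).1
      hsum hposdiv
  have hQinf : (setOf (fun k => α k < 0)).Infinite := by
    by_contra h
    rw [Set.not_infinite] at h
    have hsum : Summable (fun k => max (-α k) 0) := by
      apply summable_of_ne_finset_zero (s := h.toFinset)
      intro k hk
      rw [Set.Finite.mem_toFinset] at hk
      have hk2 : 0 ≤ α k := not_lt.1 hk
      exact max_eq_right (by linarith)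
    exact (summable_iff_not_tendsto_nat_atTop_of_nonneg (fun n => le_max_right _ _)).1
      hsum hnegdiv
  set p : ℕ → ℕ := Nat.nth (fun k => 0 ≤ α k) with hp
  set q : ℕ → ℕ := Nat.nth (fun k => α k < 0) with hq
  have hpP : ∀ i, 0 ≤ α (p i) := fun i => Nat.nth_mem_of_infinite hPinf i
  have hqQ : ∀ j, α (q j) < 0 := fun j => Nat.nth_mem_of_infinite hQinf j
  have hpinj : Function.Injective p := Nat.nth_injective hPinf
  have hqinj : Function.Injective q := Nat.nth_injective hQinf
  have hrangep : ∀ t, 0 ≤ α t → ∃ i, p i = t := fun t ht => Nat.subset_range_nth ht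
  have hrangeq : ∀ t, α t < 0 → ∃ j, q j = t := fun t ht => Nat.subset_range_nth ht
  -- count identities
  have hUid : ∀ K, ∑ k ∈ Finset.range K, max (α k) 0
      = ∑ i ∈ Finset.range (Nat.count (fun k => 0 ≤ α k) K), α (p i) := by
    intro K
    induction K with
    | zero => simp
    | succ K ih =>
      rw [Finset.sum_range_succ, Nat.count_succ]
      by_cases h : 0 ≤ α K
      · rw [if_pos h, Finset.sum_range_succ, ← ih, hp, Nat.nth_count h, max_eq_left h]
      · rw [if_neg h, max_eq_right (not_le.1 h).le, add_zero, ih]; rw [Nat.add_zero]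
  have hTid : ∀ K, ∑ k ∈ Finset.range K, max (-α k) 0
      = - ∑ j ∈ Finset.range (Nat.count (fun k => α k < 0) K), α (q j) := by
    intro K
    induction K with
    | zero => simp
    | succ K ih =>
      rw [Finset.sum_range_succ, Nat.count_succ]
      by_cases h : α K < 0
      · rw [if_pos h, Finset.sum_range_succ, ih, hq, Nat.nth_count h,
          max_eq_left (by linarith)]
        ring
      · rw [if_neg h, max_eq_right (by linarith [not_lt.1 h]), add_zero, ih]; rw [Nat.add_zero]
  have hU : ∀ D : ℝ, ∃ m, D < ∑ i ∈ Finset.range m, α (p i) := by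
    intro D
    obtain ⟨K, hK⟩ := (tendsto_atTop.1 hposdiv (D + 1)).exists
    exact ⟨Nat.count (fun k => 0 ≤ α k) K, by rw [← hUid]; linarith⟩
  have hT : ∀ D : ℝ, ∃ m, ∑ j ∈ Finset.range m, α (q j) < D := by
    intro D
    obtain ⟨K, hK⟩ := (tendsto_atTop.1 hnegdiv (-D + 1)).exists
    refine ⟨Nat.count (fun k => α k < 0) K, ?_⟩
    have := hTid K
    linarith
  obtain ⟨hbij, htend⟩ := RR_main α p q s hα0 hpP hqQ hpinj hqinj hrangep hrangeq hU hT
  exact ⟨Equiv.ofBijective _ hbij, by simpa [Equiv.ofBijective] using htend⟩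

/-- Lift a permutation of pair indices to a permutation of ℕ moving pairs as blocks. -/
def pairPerm (σ : Equiv.Perm ℕ) : Equiv.Perm ℕ where
  toFun n := 2 * σ (n / 2) + n % 2
  invFun n := 2 * σ.symm (n / 2) + n % 2
  left_inv n := by
    have h2 : (2 * σ (n / 2) + n % 2) / 2 = σ (n / 2) := by omega
    have h3 : (2 * σ (n / 2) + n % 2) % 2 = n % 2 := by omega
    simp only [h2, h3, Equiv.symm_apply_apply]
    omega
  right_inv n := by
    have h2 : (2 * σ.symm (n / 2) + n % 2) / 2 = σ.symm (n / 2) := by omega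
    have h3 : (2 * σ.symm (n / 2) + n % 2) % 2 = n % 2 := by omega
    simp only [h2, h3, Equiv.apply_symm_apply]
    omega

/-- The 2n sum range of the series `Σ x_k`. -/
def SR2 (x : ℕ → ℝ) : Set ℝ :=
  {s : ℝ | ∃ π : Equiv.Perm ℕ,
    Tendsto (fun n : ℕ => ∑ k ∈ Finset.range (2 * n), x (π k)) atTop (nhds s)}

/-- Here `x i` denotes the `(i+1)`-st term of the series, so that
`α_k = x_{2k-1} + x_{2k}` (1-indexed) becomes `α k = x (2*k) + x (2*k+1)`
(0-indexed). -/
theorem SR2_of_alpha_conditionally_convergent (x : ℕ → ℝ)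
    (α : ℕ → ℝ) (hα : ∀ k : ℕ, α k = x (2 * k) + x (2 * k + 1))
    (hconv : ∃ L : ℝ, Tendsto (fun n : ℕ => ∑ k ∈ Finset.range n, α k) atTop (nhds L))
    (habs : ¬ Summable (fun k : ℕ => |α k|)) :
    SR2 x = Set.univ := by
  ext s
  simp only [Set.mem_univ, iff_true, SR2, Set.mem_setOf_eq]
  obtain ⟨σ, hσ⟩ := riemann_rearrangement α hconv habs s
  refine ⟨pairPerm σ, ?_⟩
  have hsum : ∀ n, ∑ k ∈ Finset.range (2 * n), x ((pairPerm σ) k)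
      = ∑ m ∈ Finset.range n, α (σ m) := by
    intro n
    induction n with
    | zero => simp
    | succ n ih =>
      have h2n : 2 * (n + 1) = 2 * n + 1 + 1 := by ring
      rw [h2n, Finset.sum_range_succ, Finset.sum_range_succ, ih, Finset.sum_range_succ]
      have e1 : (pairPerm σ) (2 * n) = 2 * σ n := by
        show 2 * σ ((2 * n) / 2) + (2 * n) % 2 = 2 * σ n
        have h : (2 * n) / 2 = n := by omega
        rw [h]; omega
      have e2 : (pairPerm σ) (2 * n + 1) = 2 * σ n + 1 := by
        show 2 * σ ((2 * n + 1) / 2) + (2 * n + 1) % 2 = 2 * σ n + 1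
        have h : (2 * n + 1) / 2 = n := by omega
        rw [h]; omega
      rw [e1, e2, hα (σ n)]
      ring
  have heq : (fun n : ℕ => ∑ k ∈ Finset.range (2 * n), x ((pairPerm σ) k))
      = fun n => ∑ m ∈ Finset.range n, α (σ m) := funext hsum
  rw [heq]
  exact hσ
end

section
/- Let (x_k) and (y_k) be sequences of real numbers with Σ_{k=1}^∞ |x_k − y_k| < ∞, and let d = Σ_{k=1}^∞ (x_k − y_k) (which converges absolutely). Then SR_2(Σ x_k) = d + SR_2(Σ y_k), i.e. s ∈ SR_2(Σ y_k) if and only if s + d ∈ SR_2(Σ x_k). -/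
open Filter Topology

lemma aux_tendsto_diff (x y : ℕ → ℝ) (d : ℝ)
    (hd : HasSum (fun k : ℕ => x k - y k) d) (π : Equiv.Perm ℕ) :
    Tendsto (fun n : ℕ => ∑ k ∈ Finset.range (2 * n), (x (π k) - y (π k)))
      atTop (nhds d) := by
  have h1 : HasSum (fun k : ℕ => x (π k) - y (π k)) d :=
    (Equiv.hasSum_iff π).mpr hd
  have h2 := h1.tendsto_sum_nat
  have h3 : Tendsto (fun n : ℕ => 2 * n) atTop atTop :=
    tendsto_atTop_mono (fun n => by simp only [id_eq]; omega) tendsto_id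
  exact h2.comp h3

theorem SR2_of_equivalent_series (x y : ℕ → ℝ) (d : ℝ)
    (hxy : Summable (fun k : ℕ => |x k - y k|))
    (hd : HasSum (fun k : ℕ => x k - y k) d) :
    ∀ s : ℝ, s ∈ SR2 y ↔ s + d ∈ SR2 x := by
  intro s
  constructor
  · rintro ⟨π, hπ⟩
    refine ⟨π, ?_⟩
    have h := hπ.add (aux_tendsto_diff x y d hd π)
    have heq : (fun n : ℕ => (∑ k ∈ Finset.range (2 * n), y (π k)) +
        ∑ k ∈ Finset.range (2 * n), (x (π k) - y (π k))) =
        fun n : ℕ => ∑ k ∈ Finset.range (2 * n), x (π k) := by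
      funext n
      rw [← Finset.sum_add_distrib]
      congr 1; funext k; ring
    rwa [heq] at h
  · rintro ⟨π, hπ⟩
    refine ⟨π, ?_⟩
    have h := hπ.sub (aux_tendsto_diff x y d hd π)
    have heq : (fun n : ℕ => (∑ k ∈ Finset.range (2 * n), x (π k)) -
        ∑ k ∈ Finset.range (2 * n), (x (π k) - y (π k))) =
        fun n : ℕ => ∑ k ∈ Finset.range (2 * n), y (π k) := by
      funext n
      rw [← Finset.sum_sub_distrib]
      congr 1; funext k; ring
    rw [heq] at h
    simpa using h
end

section
/- Let (x_n) be a bounded sequence of reals and M ⊆ ℕ with Δ(M) = ∞ (i.e. Σ_{n∈M} |x_n − a| = ∞ for every a ∈ ℝ). Then for every K > 0 one can select a finite collection of pairwise disjoint pairs of indices n_1, m_1, …, n_s, m_s ∈ M (all 2s indices distinct) such that Σ_{k=1}^s |x_{n_k} − x_{m_k}| > K. -/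
open Filter Topology

/-- `Δ(M) = inf_{a ∈ ℝ} Σ_{n ∈ M} |x_n - a|`, valued in `[0, ∞]`
(an empty sum is `0`). -/
noncomputable def Delta (x : ℕ → ℝ) (M : Set ℕ) : ENNReal :=
  ⨅ a : ℝ, ∑' n : M, ENNReal.ofReal |x (n : ℕ) - a|

theorem exists_pairs_large_sum_of_Delta_top (x : ℕ → ℝ) (M : Set ℕ)
    (hbdd : ∃ C : ℝ, ∀ n : ℕ, |x n| ≤ C)
    (hΔ : Delta x M = ⊤) :
    ∀ K : ℝ, K > 0 → ∃ (s : ℕ) (n m : Fin s → ℕ),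
      (∀ k, n k ∈ M) ∧ (∀ k, m k ∈ M) ∧
      Function.Injective n ∧ Function.Injective m ∧ (∀ i j, n i ≠ m j) ∧
      K < ∑ k, |x (n k) - x (m k)| := by
  intro K hK
  obtain ⟨C, hC⟩ := hbdd
  have hall : ∀ a : ℝ, ∑' n : M, ENNReal.ofReal |x (n : ℕ) - a| = ⊤ := by
    rw [Delta, iInf_eq_top] at hΔ
    exact hΔ
  -- M is infinite
  have hMinf : M.Infinite := by
    by_contra h
    rw [Set.not_infinite] at h
    haveI : Fintype M := h.fintype
    have h0 := hall 0
    rw [tsum_fintype] at h0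
    have : ∑ n : M, ENNReal.ofReal |x (n : ℕ) - 0| < ⊤ :=
      ENNReal.sum_lt_top.mpr fun n _ => ENNReal.ofReal_lt_top
    exact this.ne h0
  set e : ℕ ↪ ↥M := hMinf.natEmbedding with he
  -- find a cluster point of the sequence on M
  obtain ⟨a, -, φ, hφ, hconv⟩ :=
    tendsto_subseq_of_bounded (Metric.isBounded_Icc (-C) C)
      (fun k : ℕ => (abs_le.mp (hC ((e k : ℕ)))
        : x ((e k : ℕ)) ∈ Set.Icc (-C) C))
  -- points of M with x close to a are infinite
  have hclose : ∀ ε : ℝ, 0 < ε → {m | m ∈ M ∧ |x m - a| < ε}.Infinite := by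
    intro ε hε
    obtain ⟨N, hN⟩ := Metric.tendsto_atTop.mp hconv ε hε
    apply Set.infinite_of_injective_forall_mem
      (f := fun k : ℕ => ((e (φ (k + N)) : ↥M) : ℕ))
    · exact Subtype.val_injective.comp (e.injective.comp
        (hφ.injective.comp (add_left_injective N)))
    · intro k
      refine ⟨(e (φ (k + N))).2, ?_⟩
      have := hN (k + N) (Nat.le_add_left N k)
      simpa [Real.dist_eq] using this
  -- extract a finite set with large sum
  have htop : ENNReal.ofReal (K + 1) < ∑' n : M, ENNReal.ofReal |x (n : ℕ) - a| := by
    rw [hall a]; exact ENNReal.ofReal_lt_top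
  rw [ENNReal.tsum_eq_iSup_sum, lt_iSup_iff] at htop
  obtain ⟨F, hF⟩ := htop
  have hFsum : K + 1 < ∑ v ∈ F, |x (v : ℕ) - a| := by
    rw [← ENNReal.ofReal_sum_of_nonneg (fun v _ => abs_nonneg _)] at hF
    exact (ENNReal.ofReal_lt_ofReal_iff_of_nonneg (by linarith)).mp hF
  set c : ℝ := (F.card : ℝ) with hc
  set ε : ℝ := 1 / (c + 1) with hεdef
  have hcnonneg : (0 : ℝ) ≤ c := Nat.cast_nonneg _
  have hεpos : 0 < ε := by positivity
  -- the "near a" points outside F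
  set S : Set ℕ := {m | m ∈ M ∧ |x m - a| < ε} \ ((fun v : ↥M => (v : ℕ)) '' ↑F)
    with hSdef
  have hSinf : S.Infinite := (hclose ε hεpos).diff (F.finite_toSet.image _)
  set g : ℕ ↪ ↥S := hSinf.natEmbedding with hg
  refine ⟨F.card,
    fun k => ((F.equivFin.symm k : ↥M) : ℕ),
    fun k => ((g (k : ℕ) : ↥S) : ℕ), ?_, ?_, ?_, ?_, ?_, ?_⟩
  · intro k; exact ((F.equivFin.symm k : ↥M)).2
  · intro k; exact ((g (k : ℕ)).2.1).1
  · exact Subtype.val_injective.comp (Subtype.val_injective.comp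
      F.equivFin.symm.injective)
  · exact Subtype.val_injective.comp (g.injective.comp Fin.val_injective)
  · intro i j hij
    apply (g (j : ℕ)).2.2
    exact ⟨(F.equivFin.symm i : ↥M), (F.equivFin.symm i).2, by simpa using hij⟩
  · -- the sum estimate
    have key : ∀ k : Fin F.card,
        |x ((F.equivFin.symm k : ↥M) : ℕ) - a| - ε ≤
        |x ((F.equivFin.symm k : ↥M) : ℕ) - x ((g (k : ℕ) : ↥S) : ℕ)| := by
      intro k
      have h1 : |x ((g (k : ℕ) : ↥S) : ℕ) - a| < ε := ((g (k : ℕ)).2.1).2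
      have h2 := abs_sub_le (x ((F.equivFin.symm k : ↥M) : ℕ))
        (x ((g (k : ℕ) : ↥S) : ℕ)) a
      linarith
    have hsum1 : ∑ k : Fin F.card, |x ((F.equivFin.symm k : ↥M) : ℕ) - a| =
        ∑ v ∈ F, |x ((v : ↥M) : ℕ) - a| := by
      rw [Equiv.sum_comp F.equivFin.symm (fun v : ↥F => |x ((v : ↥M) : ℕ) - a|)]
      exact F.sum_coe_sort (fun v => |x ((v : ↥M) : ℕ) - a|)
    have hε1 : c * ε < 1 := by
      rw [hεdef, mul_one_div]
      exact (div_lt_one (by linarith)).mpr (by linarith)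
    have hlb : ∑ k : Fin F.card,
        (|x ((F.equivFin.symm k : ↥M) : ℕ) - a| - ε) ≤
        ∑ k : Fin F.card,
          |x ((F.equivFin.symm k : ↥M) : ℕ) - x ((g (k : ℕ) : ↥S) : ℕ)| :=
      Finset.sum_le_sum fun k _ => key k
    have heq : ∑ k : Fin F.card,
        (|x ((F.equivFin.symm k : ↥M) : ℕ) - a| - ε) =
        (∑ v ∈ F, |x ((v : ↥M) : ℕ) - a|) - c * ε := by
      rw [Finset.sum_sub_distrib, hsum1, Finset.sum_const, Finset.card_univ,
        Fintype.card_fin, nsmul_eq_mul]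
    linarith
end

section
/- Let (x_n) be a real sequence and M ⊆ ℕ with Δ(M) < ∞. If M is infinite, then (x_n)_{n∈M} has a unique limit point a, this a satisfies Σ_{n∈M} |x_n − a| = Δ(M), and a is the only point at which the infimum defining Δ(M) is attained. If M is finite, then Σ_{n∈M} |x_n − a| = Δ(M) for every median a of (x_n)_{n∈M}, i.e. every a ∈ ℝ with |{n ∈ M : x_n < a}| = |{n ∈ M : x_n > a}|. -/
/-!
If `∑_{n ∈ M} |x_n - a| < ∞` for an infinite `M`, then `x_n → a` along the cofinite filter
on `M`; so `a` is the only limit point of `(x_n)_{n ∈ M}` and the only point where the sum is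
finite, hence the infimum `Δ(M) < ∞` is attained there and nowhere else. For finite `M`, the
convex function `t ↦ ∑_{n ∈ M} |x_n - t|` has the subgradient
`#{n ∈ M | x_n < a} - #{n ∈ M | a < x_n}` at `a`, which vanishes when `a` is a median.
-/

open Filter Topology

/-- `a` is a limit point of `(x_n)_{n ∈ M}`: some subsequence of `x` with
indices in `M` converges to `a`. -/
def IsLimitPointOn (x : ℕ → ℝ) (M : Set ℕ) (a : ℝ) : Prop :=
  ∃ φ : ℕ → ℕ, StrictMono φ ∧ (∀ k, φ k ∈ M) ∧
    Tendsto (fun k : ℕ => x (φ k)) atTop (nhds a)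

open Finset

lemma tendsto_cofinite_of_tsum_ofReal_abs_sub_ne_top {ι : Type*} {f : ι → ℝ} {b : ℝ}
    (h : ∑' i, ENNReal.ofReal |f i - b| ≠ ⊤) : Tendsto f cofinite (𝓝 b) := by
  simp only [← Real.enorm_eq_ofReal_abs] at h
  have hsum : Summable fun i => f i - b := (tsum_enorm_ne_top_iff_summable_norm.1 h).of_norm
  simpa using hsum.tendsto_cofinite_zero.add_const b

lemma eq_of_tsum_ofReal_abs_sub_ne_top {ι : Type*} [Infinite ι] {f : ι → ℝ} {b c : ℝ}
    (hb : ∑' i, ENNReal.ofReal |f i - b| ≠ ⊤) (hc : ∑' i, ENNReal.ofReal |f i - c| ≠ ⊤) :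
    b = c :=
  tendsto_nhds_unique (tendsto_cofinite_of_tsum_ofReal_abs_sub_ne_top hb)
    (tendsto_cofinite_of_tsum_ofReal_abs_sub_ne_top hc)

lemma tendsto_subtype_mk_cofinite_of_strictMono {M : Set ℕ} {φ : ℕ → ℕ} (hφ : StrictMono φ)
    (hφM : ∀ k, φ k ∈ M) : Tendsto (fun k => (⟨φ k, hφM k⟩ : M)) atTop cofinite := by
  rw [← Nat.cofinite_eq_atTop]
  exact Function.Injective.tendsto_cofinite fun i j hij => hφ.injective (congrArg Subtype.val hij)

lemma isLimitPointOn_iff_eq {x : ℕ → ℝ} {M : Set ℕ} {a b : ℝ} (hM : M.Infinite)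
    (hx : Tendsto (fun n : M => x n) cofinite (𝓝 a)) : IsLimitPointOn x M b ↔ b = a := by
  constructor
  · rintro ⟨φ, hφ, hφM, hxφ⟩
    exact tendsto_nhds_unique hxφ (hx.comp (tendsto_subtype_mk_cofinite_of_strictMono hφ hφM))
  · rintro rfl
    exact ⟨_, Nat.nth_strictMono hM, Nat.nth_mem_of_infinite hM,
      hx.comp (tendsto_subtype_mk_cofinite_of_strictMono (Nat.nth_strictMono hM)
        (Nat.nth_mem_of_infinite hM))⟩

lemma tsum_eq_Delta_of_forall_le {x : ℕ → ℝ} {M : Set ℕ} {a : ℝ}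
    (h : ∀ b, ∑' n : M, ENNReal.ofReal |x n - a| ≤ ∑' n : M, ENNReal.ofReal |x n - b|) :
    ∑' n : M, ENNReal.ofReal |x n - a| = Delta x M :=
  le_antisymm (le_iInf h) (iInf_le _ a)

lemma Finset.sum_abs_sub_le_of_card_lt_eq_card_gt {ι : Type*} (s : Finset ι) (f : ι → ℝ)
    {a : ℝ} (ha : #{i ∈ s | f i < a} = #{i ∈ s | a < f i}) (b : ℝ) :
    ∑ i ∈ s, |f i - a| ≤ ∑ i ∈ s, |f i - b| := by
  classical
  set g : ι → ℝ := fun i => (if f i < a then 1 else 0) - (if a < f i then 1 else 0)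
  have hg : ∑ i ∈ s, g i = 0 := by
    simp only [g, Finset.sum_sub_distrib, Finset.sum_boole, ha, sub_self]
  have hsub : ∀ i, |f i - a| + g i * (b - a) ≤ |f i - b| := by
    intro i
    simp only [g]
    cases abs_cases (f i - a) <;> cases abs_cases (f i - b) <;> split_ifs <;> linarith
  calc ∑ i ∈ s, |f i - a| = ∑ i ∈ s, (|f i - a| + g i * (b - a)) := by
        rw [Finset.sum_add_distrib, ← Finset.sum_mul, hg, zero_mul, add_zero]
    _ ≤ ∑ i ∈ s, |f i - b| := Finset.sum_le_sum fun i _ => hsub i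

lemma tsum_ofReal_abs_sub_le_of_ncard_lt_eq_ncard_gt {x : ℕ → ℝ} {M : Set ℕ} (hM : M.Finite)
    {a : ℝ} (ha : (M ∩ {n | x n < a}).ncard = (M ∩ {n | a < x n}).ncard) (b : ℝ) :
    ∑' n : M, ENNReal.ofReal |x n - a| ≤ ∑' n : M, ENNReal.ofReal |x n - b| := by
  lift M to Finset ℕ using hM
  rw [Finset.tsum_subtype' M fun n => ENNReal.ofReal |x n - a|,
    Finset.tsum_subtype' M fun n => ENNReal.ofReal |x n - b|,
    ← ENNReal.ofReal_sum_of_nonneg fun _ _ => abs_nonneg _,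
    ← ENNReal.ofReal_sum_of_nonneg fun _ _ => abs_nonneg _]
  refine ENNReal.ofReal_le_ofReal (M.sum_abs_sub_le_of_card_lt_eq_card_gt x ?_ b)
  convert ha using 1 <;> rw [← Set.ncard_coe_finset, Finset.coe_filter] <;> rfl

theorem Delta_attained (x : ℕ → ℝ) (M : Set ℕ) (hΔ : Delta x M < ⊤) :
    (M.Infinite → ∃ a : ℝ,
      IsLimitPointOn x M a ∧ (∀ b : ℝ, IsLimitPointOn x M b → b = a) ∧
      (∑' n : M, ENNReal.ofReal |x (n : ℕ) - a|) = Delta x M ∧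
      (∀ b : ℝ, (∑' n : M, ENNReal.ofReal |x (n : ℕ) - b|) = Delta x M → b = a)) ∧
    (M.Finite → ∀ a : ℝ,
      (M ∩ {n : ℕ | x n < a}).ncard = (M ∩ {n : ℕ | a < x n}).ncard →
      (∑' n : M, ENNReal.ofReal |x (n : ℕ) - a|) = Delta x M) := by
  refine ⟨fun hM => ?_, fun hM a ha => ?_⟩
  · have : Infinite M := hM.to_subtype
    obtain ⟨a, ha⟩ := iInf_lt_iff.1 hΔ
    have hx := tendsto_cofinite_of_tsum_ofReal_abs_sub_ne_top ha.ne
    have hunique : ∀ b, ∑' n : M, ENNReal.ofReal |x n - b| ≠ ⊤ → b = a := fun b hb =>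
      eq_of_tsum_ofReal_abs_sub_ne_top hb ha.ne
    refine ⟨a, (isLimitPointOn_iff_eq hM hx).2 rfl, fun b => (isLimitPointOn_iff_eq hM hx).1,
      tsum_eq_Delta_of_forall_le fun b => ?_, fun b hb => hunique b (hb ▸ hΔ.ne)⟩
    by_cases hb : ∑' n : M, ENNReal.ofReal |x n - b| = ⊤
    · exact hb ▸ le_top
    · rw [hunique b hb]
  · exact tsum_eq_Delta_of_forall_le (tsum_ofReal_abs_sub_le_of_ncard_lt_eq_ncard_gt hM ha)
end

section
/- Let (x_n) be a real sequence and M ⊆ ℕ with Δ(M) < ∞. Then for every ε > 0 one can select a finite collection of pairwise disjoint pairs of indices n_1, m_1, …, n_s, m_s ∈ M (all 2s indices distinct) such that Σ_{k=1}^s |x_{n_k} − x_{m_k}| > Δ(M) − ε. -/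
open Filter Topology

private lemma abs_sub_clamp_le {lo hi v a : ℝ} (h1 : lo ≤ v) (h2 : v ≤ hi) :
    |v - max lo (min a hi)| ≤ |v - a| := by
  rcases le_total a lo with h | h
  · have hab : a ≤ hi := h.trans (h1.trans h2)
    rw [min_eq_left hab, max_eq_left h]
    rw [abs_of_nonneg (by linarith), abs_of_nonneg (by linarith)]
    linarith
  · rcases le_total a hi with h' | h'
    · rw [min_eq_left h', max_eq_right h]
    · rw [min_eq_right h', max_eq_right (h1.trans h2)]
      rw [abs_of_nonpos (by linarith), abs_of_nonpos (by linarith)]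
      linarith

/-- In a finite set one can find disjoint pairs whose gap-sum dominates
`∑_{i ∈ F} |x i - a|` for some `a`. -/
private lemma lemA (x : ℕ → ℝ) (F : Finset ℕ) :
    ∃ (s : ℕ) (n m : Fin s → ℕ),
      (∀ k, n k ∈ F) ∧ (∀ k, m k ∈ F) ∧
      Function.Injective n ∧ Function.Injective m ∧ (∀ i j, n i ≠ m j) ∧
      ∃ a : ℝ, ∑ i ∈ F, |x i - a| ≤ ∑ k, |x (n k) - x (m k)| := by
  induction F using Finset.strongInduction with
  | _ F ih =>
  by_cases h1 : F.card ≤ 1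
  · obtain ⟨i, hFi⟩ := Finset.card_le_one_iff_subset_singleton.mp h1
    refine ⟨0, Fin.elim0, Fin.elim0, fun k => k.elim0, fun k => k.elim0,
      fun k => k.elim0, fun k => k.elim0, fun k => k.elim0, x i, ?_⟩
    rw [Finset.sum_eq_zero (fun j hj => ?_)]
    · simp
    · have := hFi hj
      simp only [Finset.mem_singleton] at this
      simp [this]
  · push_neg at h1
    have hne : F.Nonempty := Finset.card_pos.mp (by omega)
    -- find i ≠ j with x maximal at i, minimal at j
    obtain ⟨i, hiF, hmax, j, hjF, hij, hmin⟩ :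
        ∃ i ∈ F, (∀ k ∈ F, x k ≤ x i) ∧ ∃ j ∈ F, i ≠ j ∧ ∀ k ∈ F, x j ≤ x k := by
      obtain ⟨i0, hi0, hmax0⟩ := F.exists_max_image x hne
      obtain ⟨j0, hj0, hmin0⟩ := F.exists_min_image x hne
      by_cases hij0 : i0 = j0
      · obtain ⟨i1, hi1, j1, hj1, hne1⟩ := Finset.one_lt_card.mp h1
        have hall : ∀ k ∈ F, x k = x i0 := fun k hk =>
          le_antisymm (hmax0 k hk) (hij0 ▸ hmin0 k hk)
        exact ⟨i1, hi1, fun k hk => by rw [hall k hk, hall i1 hi1],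
          j1, hj1, hne1, fun k hk => by rw [hall k hk, hall j1 hj1]⟩
      · exact ⟨i0, hi0, hmax0, j0, hj0, hij0, hmin0⟩
    set F' : Finset ℕ := (F.erase i).erase j with hF'
    have hF'sub : F' ⊆ F := (Finset.erase_subset _ _).trans (Finset.erase_subset _ _)
    have hiF' : i ∉ F' := fun h => (Finset.mem_erase.mp (Finset.mem_erase.mp h).2).1 rfl
    have hjF' : j ∉ F' := fun h => (Finset.mem_erase.mp h).1 rfl
    have hss : F' ⊂ F := Finset.ssubset_iff_of_subset hF'sub |>.mpr ⟨i, hiF, hiF'⟩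
    obtain ⟨s, n, m, hnF, hmF, hninj, hminj, hcross, a', ha'⟩ := ih F' hss
    have hxji : x j ≤ x i := hmin i hiF
    set a : ℝ := max (x j) (min a' (x i)) with haa
    have haj : x j ≤ a := le_max_left _ _
    have hai : a ≤ x i := max_le hxji (min_le_right _ _)
    refine ⟨s + 1, Fin.cons i n, Fin.cons j m, ?_, ?_, ?_, ?_, ?_, a, ?_⟩
    · intro k
      refine Fin.cases ?_ (fun p => ?_) k
      · simpa using hiF
      · simpa using hF'sub (hnF p)
    · intro k
      refine Fin.cases ?_ (fun p => ?_) k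
      · simpa using hjF
      · simpa using hF'sub (hmF p)
    · rw [Fin.cons_injective_iff]
      exact ⟨fun ⟨p, hp⟩ => hiF' (hp ▸ hnF p), hninj⟩
    · rw [Fin.cons_injective_iff]
      exact ⟨fun ⟨p, hp⟩ => hjF' (hp ▸ hmF p), hminj⟩
    · intro p q
      refine Fin.cases ?_ (fun p' => ?_) p <;>
        [refine Fin.cases ?_ (fun q' => ?_) q; refine Fin.cases ?_ (fun q' => ?_) q]
      · simpa using hij
      · simp only [Fin.cons_zero, Fin.cons_succ]
        exact fun h => hiF' (h ▸ hmF q')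
      · simp only [Fin.cons_zero, Fin.cons_succ]
        exact fun h => hjF' (h ▸ hnF p')
      · simp only [Fin.cons_succ]
        exact hcross p' q'
    · have hsum : ∑ i ∈ F, |x i - a|
          = |x i - a| + (|x j - a| + ∑ k ∈ F', |x k - a|) := by
        rw [hF', ← Finset.add_sum_erase F _ hiF,
          ← Finset.add_sum_erase (F.erase i) _
            (Finset.mem_erase.mpr ⟨Ne.symm hij, hjF⟩)]
      have hstep : ∑ k ∈ F', |x k - a| ≤ ∑ k ∈ F', |x k - a'| :=
        Finset.sum_le_sum fun k hk =>
          abs_sub_clamp_le (hmin k (hF'sub hk)) (hmax k (hF'sub hk))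
      have hpair : |x i - a| + |x j - a| = x i - x j := by
        rw [abs_of_nonneg (by linarith), abs_of_nonpos (by linarith)]
        ring
      have hnew : ∑ k : Fin (s + 1), |x ((Fin.cons i n : Fin (s+1) → ℕ) k) - x ((Fin.cons j m : Fin (s+1) → ℕ) k)|
          = |x i - x j| + ∑ k : Fin s, |x (n k) - x (m k)| := by
        rw [Fin.sum_univ_succ]
        simp
      have e1 : |x i - x j| = x i - x j := abs_of_nonneg (by linarith)
      rw [hnew, hsum, e1]
      linarith

private lemma exists_finset (x : ℕ → ℝ) (M : Set ℕ) (hΔ : Delta x M < ⊤)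
    {ε : ℝ} (hε : 0 < ε) (hbig : ε ≤ (Delta x M).toReal) :
    ∃ F : Finset ℕ, ↑F ⊆ M ∧
      ∀ a : ℝ, (Delta x M).toReal - ε < ∑ i ∈ F, |x i - a| := by
  by_contra hcon
  push_neg at hcon
  set C : ℝ := (Delta x M).toReal - ε with hC
  have hC0 : 0 ≤ C := by
    have : 0 < (Delta x M).toReal := lt_of_lt_of_le hε hbig
    simp [hC]; linarith
  -- M is nonempty
  obtain ⟨i₀, hi₀⟩ : M.Nonempty := by
    rcases Set.eq_empty_or_nonempty M with h | h
    · exfalso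
      have hzero : Delta x M = 0 := by
        have : IsEmpty ↥M := Set.isEmpty_coe_sort.mpr h
        simp [Delta, tsum_empty]
      rw [hzero] at hbig
      simp at hbig
      linarith
    · exact h
  -- the family of compact sets
  have hι : Nonempty {F : Finset ℕ // ↑F ⊆ M ∧ i₀ ∈ F} :=
    ⟨⟨{i₀}, by simpa using hi₀, Finset.mem_singleton_self i₀⟩⟩
  set Z : {F : Finset ℕ // ↑F ⊆ M ∧ i₀ ∈ F} → Set ℝ :=
    fun F => {a | ∑ i ∈ F.1, |x i - a| ≤ C} with hZ
  have hcont : ∀ F : Finset ℕ, Continuous (fun a : ℝ => ∑ i ∈ F, |x i - a|) :=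
    fun F => continuous_finset_sum _ fun i _ => (continuous_const.sub continuous_id).abs
  have hcl : ∀ F, IsClosed (Z F) := fun F => isClosed_Iic.preimage (hcont F.1)
  have hne : ∀ F, (Z F).Nonempty := fun F => by
    obtain ⟨a, ha⟩ := hcon F.1 F.2.1
    exact ⟨a, ha⟩
  have hmono : ∀ (F G : Finset ℕ), F ⊆ G → ∀ a : ℝ,
      ∑ i ∈ F, |x i - a| ≤ ∑ i ∈ G, |x i - a| := fun F G hFG a =>
    Finset.sum_le_sum_of_subset_of_nonneg hFG (fun i _ _ => abs_nonneg _)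
  have hdir : Directed (· ⊇ ·) Z := by
    intro F G
    refine ⟨⟨F.1 ∪ G.1, ?_, Finset.mem_union_left _ F.2.2⟩, ?_, ?_⟩
    · push_cast
      exact Set.union_subset F.2.1 G.2.1
    · exact fun a ha => le_trans (hmono _ _ Finset.subset_union_left a) ha
    · exact fun a ha => le_trans (hmono _ _ Finset.subset_union_right a) ha
  have hcpt : ∀ F, IsCompact (Z F) := by
    intro F
    refine (isCompact_Icc (a := x i₀ - C) (b := x i₀ + C)).of_isClosed_subset (hcl F) (fun a ha => ?_)
    · have h1 : |x i₀ - a| ≤ C :=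
        le_trans (Finset.single_le_sum (fun i _ => abs_nonneg (x i - a)) F.2.2) ha
      have := abs_le.mp h1
      exact Set.mem_Icc.mpr ⟨by linarith [this.2], by linarith [this.1]⟩
  obtain ⟨a, ha⟩ :=
    IsCompact.nonempty_iInter_of_directed_nonempty_isCompact_isClosed Z hdir hne hcpt hcl
  have haZ : ∀ F, a ∈ Z F := Set.mem_iInter.mp ha
  -- derive a contradiction
  have hle : Delta x M ≤ ENNReal.ofReal C := by
    refine le_trans (iInf_le _ a) ?_
    rw [ENNReal.tsum_eq_iSup_sum]
    refine iSup_le fun s => ?_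
    rw [← ENNReal.ofReal_sum_of_nonneg (s := s) (f := fun n : ↥M => |x ↑n - a|)
      (fun i _ => abs_nonneg _)]
    refine ENNReal.ofReal_le_ofReal ?_
    have himg : ∑ i ∈ s.image Subtype.val, |x i - a| = ∑ n ∈ s, |x (↑n) - a| :=
      Finset.sum_image (fun p _ q _ h => Subtype.ext h)
    rw [← himg]
    set F₀ : Finset ℕ := s.image Subtype.val ∪ {i₀} with hF₀
    have hsub : ↑F₀ ⊆ M := by
      intro i hi
      rw [hF₀] at hi
      simp only [Finset.coe_union, Finset.coe_image, Finset.coe_singleton, Set.mem_union,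
        Set.mem_image, Finset.mem_coe, Set.mem_singleton_iff] at hi
      rcases hi with ⟨n, _, rfl⟩ | rfl
      · exact n.2
      · exact hi₀
    have := haZ ⟨F₀, hsub, Finset.mem_union_right _ (Finset.mem_singleton_self i₀)⟩
    exact le_trans (hmono _ _ Finset.subset_union_left a) this
  have hlt : ENNReal.ofReal C < Delta x M := by
    conv_rhs => rw [← ENNReal.ofReal_toReal hΔ.ne]
    exact (ENNReal.ofReal_lt_ofReal_iff (lt_of_lt_of_le hε hbig)).mpr (by simp [hC]; linarith)
  exact absurd (lt_of_le_of_lt hle hlt) (lt_irrefl _)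

theorem exists_pairs_sum_gt_Delta_sub_eps (x : ℕ → ℝ) (M : Set ℕ)
    (hΔ : Delta x M < ⊤) :
    ∀ ε : ℝ, ε > 0 → ∃ (s : ℕ) (n m : Fin s → ℕ),
      (∀ k, n k ∈ M) ∧ (∀ k, m k ∈ M) ∧
      Function.Injective n ∧ Function.Injective m ∧ (∀ i j, n i ≠ m j) ∧
      (Delta x M).toReal - ε < ∑ k, |x (n k) - x (m k)| := by
  intro ε hε
  by_cases hbig : ε ≤ (Delta x M).toReal
  · obtain ⟨F, hFM, hF⟩ := exists_finset x M hΔ hε hbig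
    obtain ⟨s, n, m, h1, h2, h3, h4, h5, a, ha⟩ := lemA x F
    exact ⟨s, n, m, fun k => hFM (h1 k), fun k => hFM (h2 k), h3, h4, h5,
      lt_of_lt_of_le (hF a) ha⟩
  · push_neg at hbig
    refine ⟨0, Fin.elim0, Fin.elim0, fun k => k.elim0, fun k => k.elim0,
      fun k => k.elim0, fun k => k.elim0, fun k => k.elim0, ?_⟩
    simp only [Finset.univ_eq_empty, Finset.sum_empty]
    linarith
end

section
/- Consider the series with terms x_{2k−1} = 1 and x_{2k} = −1 for all k ∈ ℕ (i.e. 1 + (−1) + 1 + (−1) + ⋯). Then SR_2(Σ x_k) = 2ℤ = {2m : m ∈ ℤ}. -/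
open Filter Topology

/-- Permutation that puts the first `t` even numbers first, then interleaves
odds and the remaining evens. -/
def evenFirst (t : ℕ) : Equiv.Perm ℕ where
  toFun k := if k < t then 2 * k else if (k - t) % 2 = 0 then (k - t) + 1 else 2 * t + (k - t) - 1
  invFun n := if n % 2 = 1 then t + (n - 1) else if n < 2 * t then n / 2 else n - t + 1
  left_inv k := by
    simp only
    split_ifs <;> omega
  right_inv n := by
    simp only
    split_ifs <;> omega

/-- The swap `2k ↔ 2k+1` permutation. -/
def parSwap : Equiv.Perm ℕ where
  toFun n := if n % 2 = 0 then n + 1 else n - 1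
  invFun n := if n % 2 = 0 then n + 1 else n - 1
  left_inv n := by simp only; split_ifs <;> omega
  right_inv n := by simp only; split_ifs <;> omega

/-- The series `1 + (-1) + 1 + (-1) + ⋯` : `x (2*k) = 1` and `x (2*k+1) = -1`
(0-indexed). -/
theorem SR2_one_minus_one (x : ℕ → ℝ)
    (hx : ∀ k : ℕ, x (2 * k) = 1 ∧ x (2 * k + 1) = -1) :
    SR2 x = {s : ℝ | ∃ m : ℤ, s = 2 * m} := by
  have hval : ∀ j : ℕ, x j = 1 ∨ x j = -1 := by
    intro j
    rcases Nat.even_or_odd j with ⟨k, hk⟩ | ⟨k, hk⟩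
    · left; rw [hk, ← two_mul]; exact (hx k).1
    · right; rw [hk]; exact (hx k).2
  ext s
  constructor
  · rintro ⟨π, hπ⟩
    set S : ℕ → ℝ := fun n => ∑ k ∈ Finset.range (2 * n), x (π k) with hS
    have hint : ∀ n : ℕ, ∃ m : ℤ, S n = 2 * m := by
      intro n
      induction n with
      | zero => exact ⟨0, by simp [hS]⟩
      | succ n ih =>
        obtain ⟨m, hm⟩ := ih
        have h2 : 2 * (n + 1) = (2 * n + 1) + 1 := by ring
        have : S (n + 1) = S n + x (π (2 * n)) + x (π (2 * n + 1)) := by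
          simp only [hS, h2, Finset.sum_range_succ]
        rcases hval (π (2 * n)) with h1 | h1 <;> rcases hval (π (2 * n + 1)) with h2' | h2'
        · exact ⟨m + 1, by rw [this, hm, h1, h2']; push_cast; ring⟩
        · exact ⟨m, by rw [this, hm, h1, h2']; push_cast; ring⟩
        · exact ⟨m, by rw [this, hm, h1, h2']; push_cast; ring⟩
        · exact ⟨m - 1, by rw [this, hm, h1, h2']; push_cast; ring⟩
    -- eventually constant
    obtain ⟨N, hN⟩ := (Metric.tendsto_atTop.mp hπ) (1/2) (by norm_num)
    obtain ⟨m, hm⟩ := hint N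
    refine ⟨m, ?_⟩
    have hconst : ∀ n ≥ N, S n = S N := by
      intro n hn
      obtain ⟨m', hm'⟩ := hint n
      have h1 := hN n hn
      have h2 := hN N le_rfl
      rw [Real.dist_eq] at h1 h2
      have : |(2 : ℝ) * m' - 2 * m| < 1 := by
        have := abs_sub_lt_iff.mp h1
        have := abs_sub_lt_iff.mp h2
        rw [hm'] at *; rw [hm] at *
        rw [abs_sub_lt_iff]
        constructor <;> linarith [abs_sub_lt_iff.mp h1, abs_sub_lt_iff.mp h2]
      have hmm : m' = m := by
        have : |(m' : ℝ) - m| < 1 := by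
          rw [show (2:ℝ) * m' - 2 * m = 2 * ((m':ℝ) - m) by ring, abs_mul] at this
          rw [abs_of_nonneg (by norm_num : (0:ℝ) ≤ 2)] at this
          linarith
        have h3 : |m' - m| < 1 := by exact_mod_cast (by push_cast; exact this : |((m' - m : ℤ) : ℝ)| < 1)
        have := abs_lt.mp h3
        omega
      rw [hm', hm, hmm]
    have : Tendsto S atTop (nhds (S N)) := by
      apply Tendsto.congr' _ tendsto_const_nhds
      filter_upwards [eventually_ge_atTop N] with n hn
      exact (hconst n hn).symm
    have := tendsto_nhds_unique hπ this
    rw [this, hm]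
  · rintro ⟨m, rfl⟩
    -- main construction for nonnegative targets
    have key : ∀ t : ℕ, Tendsto (fun n : ℕ => ∑ k ∈ Finset.range (2 * n),
        x (evenFirst (2 * t) k)) atTop (nhds (2 * t)) := by
      intro t
      have hsum : ∀ j : ℕ, ∑ k ∈ Finset.range (2 * (t + j)), x (evenFirst (2 * t) k)
          = 2 * t := by
        intro j
        induction j with
        | zero =>
          have : ∀ k ∈ Finset.range (2 * t), x (evenFirst (2 * t) k) = 1 := by
            intro k hk
            rw [Finset.mem_range] at hk
            have : evenFirst (2 * t) k = 2 * k := by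
              simp only [evenFirst, Equiv.coe_fn_mk, if_pos hk]
            rw [this]; exact (hx k).1
          simp only [Nat.add_zero]
          rw [Finset.sum_congr rfl this]
          simp
        | succ j ih =>
          have h2 : 2 * (t + (j + 1)) = (2 * (t + j) + 1) + 1 := by ring
          rw [h2, Finset.sum_range_succ, Finset.sum_range_succ, ih]
          have e1 : evenFirst (2 * t) (2 * (t + j)) = 2 * j + 1 := by
            simp only [evenFirst, Equiv.coe_fn_mk]
            split_ifs <;> omega
          have e2 : evenFirst (2 * t) (2 * (t + j) + 1) = 2 * (2 * t + j) := by
            simp only [evenFirst, Equiv.coe_fn_mk]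
            split_ifs <;> omega
          rw [e1, e2, (hx j).2, (hx (2 * t + j)).1]
          ring
      apply Tendsto.congr' _ tendsto_const_nhds
      filter_upwards [eventually_ge_atTop t] with n hn
      have : 2 * n = 2 * (t + (n - t)) := by omega
      rw [this, hsum]
    rcases le_or_gt 0 m with hm | hm
    · refine ⟨evenFirst (2 * m.toNat), ?_⟩
      have := key m.toNat
      have hc : ((m.toNat : ℕ) : ℝ) = (m : ℝ) := by exact_mod_cast Int.toNat_of_nonneg hm
      rwa [hc] at this
    · -- negative case: compose with parSwap
      have hswap : ∀ j : ℕ, x (parSwap j) = - x j := by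
        intro j
        rcases Nat.even_or_odd j with ⟨k, hk⟩ | ⟨k, hk⟩
        · have hj : parSwap j = 2 * k + 1 := by
            simp only [parSwap, Equiv.coe_fn_mk]; split_ifs <;> omega
          rw [hj, (hx k).2, hk, ← two_mul, (hx k).1]
        · have hj : parSwap j = 2 * k := by
            simp only [parSwap, Equiv.coe_fn_mk]; split_ifs <;> omega
          rw [hj, (hx k).1, hk, (hx k).2]; ring
      refine ⟨(evenFirst (2 * (-m).toNat)).trans parSwap, ?_⟩
      have := (key (-m).toNat).neg
      have heq : ∀ n : ℕ, ∑ k ∈ Finset.range (2 * n),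
          x (((evenFirst (2 * (-m).toNat)).trans parSwap) k)
          = - ∑ k ∈ Finset.range (2 * n), x (evenFirst (2 * (-m).toNat) k) := by
        intro n
        rw [← Finset.sum_neg_distrib]
        apply Finset.sum_congr rfl
        intro k _
        simp only [Equiv.trans_apply]
        exact hswap _
      have hcast : -((2 : ℝ) * ((-m).toNat : ℕ)) = 2 * m := by
        have h : (((-m).toNat : ℕ) : ℝ) = -(m : ℝ) := by
          exact_mod_cast Int.toNat_of_nonneg (by omega : (0:ℤ) ≤ -m)
        rw [h]; ring
      rw [← hcast]
      apply Tendsto.congr _ this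
      intro n
      exact (heq n).symm
end
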